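/- Let p be a prime, m ≥ 0 and λ ≥ m integers, b = p^m, and a ∈ ℤ_p with v_p(a) = λ. The unique y ∈ ℚ_p⟦t⟧ with constant term 0 and y' = a·t^{b-1} is y = (a/b)·t^b, and the p-adic valuation of its coefficient a/b is exactly λ - m. In particular, the loss of precision ⌊log_p n⌋ in the precision bound λ ≥ ⌊log_p n⌋ + κ is attained (taking n = b), so the bound cannot be improved. -/

import Mathlib

open PowerSeries

namespace PowerSeries

theorem derivative_C_mul_X_pow {R : Type*} [CommSemiring R] (c : R) (n : ℕ) :
    d⁄dX R (C c * X ^ n) = C (c * n) * X ^ (n - 1) := by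
  rw [← smul_eq_C_mul, Derivation.map_smul, derivative_pow, derivative_X, smul_eq_C_mul]
  simp [map_mul, mul_assoc]

theorem constantCoeff_eq_zero_and_derivative_eq_iff {K : Type*} [Field K] [CharZero K]
    {n : ℕ} (hn : n ≠ 0) (c : K) (y : K⟦X⟧) :
    (constantCoeff y = 0 ∧ d⁄dX K y = C c * X ^ (n - 1)) ↔ y = C (c / n) * X ^ n := by
  have hsol : d⁄dX K (C (c / n) * X ^ n) = C c * X ^ (n - 1) := by
    rw [derivative_C_mul_X_pow, div_mul_cancel₀ _ (Nat.cast_ne_zero.mpr hn)]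
  have hsol0 : constantCoeff (C (c / n) * X ^ n : K⟦X⟧) = 0 := by simp [hn]
  refine ⟨fun ⟨h0, hd⟩ => derivative.ext (hd.trans hsol.symm) (h0.trans hsol0.symm), ?_⟩
  rintro rfl
  exact ⟨hsol0, hsol⟩

end PowerSeries

namespace Padic

theorem valuation_div {p : ℕ} [Fact p.Prime] {x y : ℚ_[p]} (hx : x ≠ 0) (hy : y ≠ 0) :
    (x / y).valuation = x.valuation - y.valuation := by
  rw [div_eq_mul_inv, valuation_mul hx (inv_ne_zero hy), valuation_inv, sub_eq_add_neg]

end Padic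

theorem stmt15 (p : ℕ) [hp : Fact p.Prime] (m lam : ℕ)
    (a : ℚ_[p]) (ha0 : a ≠ 0) (ha : a.valuation = (lam : ℤ)) :
    (∀ y : PowerSeries ℚ_[p],
      (constantCoeff y = 0 ∧
          derivativeFun y = C a * X ^ (p ^ m - 1)) ↔
        y = C (a / (p ^ m : ℚ_[p])) * X ^ (p ^ m)) ∧
    (a / (p ^ m : ℚ_[p])).valuation = (lam : ℤ) - (m : ℤ) := by
  have hpm : p ^ m ≠ 0 := pow_ne_zero m hp.out.ne_zero
  refine ⟨fun y => ?_, ?_⟩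
  · -- `derivativeFun y` is `d⁄dX _ y` by definition
    exact_mod_cast constantCoeff_eq_zero_and_derivative_eq_iff hpm a y
  · rw [Padic.valuation_div ha0 (by exact_mod_cast hpm), Padic.valuation_pow, Padic.valuation_p,
      ha, mul_one]
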